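/- Let k : ℝ → ℝ be continuous, 2π-periodic, strictly positive, with ∫₀^{2π} k = 1. Let h : ℝ → ℝ be continuous and 2π-periodic with ∫₀^{2π} h = 0, and let ℋ be the 2π-periodic primitive of h normalized by ∫₀^{2π} ℋ(θ)/k(θ) dθ = 0. Then the dual-norm identity holds: sup{ ∫₀^{2π} h(θ)·v(θ) dθ : v is C¹ and 2π-periodic, ∫₀^{2π} v = 0, ∫₀^{2π} v'(θ)²·k(θ) dθ ≤ 1 } = (∫₀^{2π} ℋ(θ)²/k(θ) dθ)^{1/2}. -/

import Mathlib

noncomputable section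

open MeasureTheory

/-- The `2π`-periodic primitive of a zero-mean function `a`, normalized so that its
integral against `1/k` over a period vanishes. -/
def prim (k a : ℝ → ℝ) (θ : ℝ) : ℝ :=
  (∫ u in (0:ℝ)..θ, a u) -
    (∫ s in (0:ℝ)..(2 * Real.pi), (∫ u in (0:ℝ)..s, a u) / k s) /
      (∫ s in (0:ℝ)..(2 * Real.pi), 1 / k s)

/-!
Integrating by parts against the periodic primitive `F` of `h` gives `∫ h v = -∫ F v'`, so
the weighted Cauchy–Schwarz inequality `(∫ F v')² ≤ (∫ F² / k) (∫ v'² k)` bounds the supremum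
by `(∫ F² / k)^{1/2}`. The bound is attained by the zero-mean primitive of
`-F / (k (∫ F² / k)^{1/2})`: this primitive is periodic because the normalization
`∫ F / k = 0` of `F` gives its derivative zero mean.
-/

open Function

section Periodic

variable {T : ℝ}

theorem Function.Periodic.intervalIntegral_of_integral_eq_zero {f : ℝ → ℝ}
    (hf : Periodic f T) (hfc : Continuous f) (hf0 : ∫ x in 0..T, f x = 0) :
    Periodic (fun t => ∫ x in 0..t, f x) T := fun t => by
  simp only [hf.intervalIntegral_add_eq_add 0 t fun _ _ => hfc.intervalIntegrable _ _, zero_add,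
    hf0, add_zero]

theorem integral_mul_eq_neg_integral_mul_deriv_of_periodic {F f v : ℝ → ℝ}
    (hF : ∀ x, HasDerivAt F (f x) x) (hf : Continuous f) (hv : ContDiff ℝ 1 v)
    (hFp : Periodic F T) (hvp : Periodic v T) :
    ∫ x in 0..T, f x * v x = -∫ x in 0..T, F x * deriv v x := by
  have hvd : Differentiable ℝ v := hv.differentiable one_ne_zero
  have hFc : Continuous F := continuous_iff_continuousAt.2 fun x => (hF x).continuousAt
  have hparts := intervalIntegral.integral_mul_deriv_eq_deriv_mul_of_hasDerivAt
    hFc.continuousOn hvd.continuous.continuousOn (fun x _ => hF x) (fun x _ => (hvd x).hasDerivAt)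
    (hf.intervalIntegrable 0 T) (hv.continuous_deriv_one.intervalIntegrable 0 T)
  have hF0 : F T = F 0 := by simpa using hFp 0
  have hv0 : v T = v 0 := by simpa using hvp 0
  rw [hparts, hF0, hv0, sub_self, zero_sub, neg_neg]

theorem exists_periodic_integral_eq_zero_deriv_eq (hT : T ≠ 0) {g : ℝ → ℝ}
    (hg : Continuous g) (hgp : Periodic g T) (hg0 : ∫ x in 0..T, g x = 0) :
    ∃ v : ℝ → ℝ, ContDiff ℝ 1 v ∧ Periodic v T ∧ ∫ x in 0..T, v x = 0 ∧ deriv v = g := by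
  set G : ℝ → ℝ := fun t => ∫ x in 0..t, g x
  have hG : ∀ x, HasDerivAt G (g x) x := fun x =>
    intervalIntegral.integral_hasDerivAt_right (hg.intervalIntegrable _ _)
      hg.stronglyMeasurable.stronglyMeasurableAtFilter hg.continuousAt
  have hGc : Continuous G :=
    intervalIntegral.continuous_primitive (fun _ _ => hg.intervalIntegrable _ _) 0
  set v : ℝ → ℝ := fun t => G t - (∫ x in 0..T, G x) / T
  have hv : ∀ x, HasDerivAt v (g x) x := fun x => (hG x).sub_const _
  have hderiv : deriv v = g := funext fun x => (hv x).deriv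
  have hGp : Periodic G T := hgp.intervalIntegral_of_integral_eq_zero hg hg0
  refine ⟨v, ?_, fun t => by simp only [v, hGp t], ?_, hderiv⟩
  · exact contDiff_one_iff_deriv.2 ⟨fun x => (hv x).differentiableAt, hderiv ▸ hg⟩
  · rw [intervalIntegral.integral_sub (hGc.intervalIntegrable _ _) intervalIntegrable_const,
      intervalIntegral.integral_const, smul_eq_mul, sub_zero, mul_div_cancel₀ _ hT, sub_self]

end Periodic

theorem sq_integral_mul_le_integral_sq_div_mul_integral_sq_mul {a b : ℝ} (hab : a ≤ b)
    {F g w : ℝ → ℝ} (hF : Continuous F) (hg : Continuous g) (hw : Continuous w)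
    (hwpos : ∀ x, 0 < w x) :
    (∫ x in a..b, F x * g x) ^ 2 ≤
      (∫ x in a..b, F x ^ 2 / w x) * ∫ x in a..b, g x ^ 2 * w x := by
  have hw0 : ∀ x, w x ≠ 0 := fun x => (hwpos x).ne'
  have hquad : ∀ t : ℝ, 0 ≤ (∫ x in a..b, g x ^ 2 * w x) * (t * t) +
      (2 * ∫ x in a..b, F x * g x) * t + ∫ x in a..b, F x ^ 2 / w x := by
    intro t
    have hexpand : ∀ x, (F x + t * w x * g x) ^ 2 / w x =
        g x ^ 2 * w x * (t * t) + F x * g x * (2 * t) + F x ^ 2 / w x := fun x => by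
      field_simp [hw0 x]
      ring
    have hnonneg : 0 ≤ ∫ x in a..b, (F x + t * w x * g x) ^ 2 / w x :=
      intervalIntegral.integral_nonneg hab fun x _ => div_nonneg (sq_nonneg _) (hwpos x).le
    have hi1 : IntervalIntegrable (fun x => g x ^ 2 * w x * (t * t)) volume a b :=
      (((hg.pow 2).mul hw).mul continuous_const).intervalIntegrable _ _
    have hi2 : IntervalIntegrable (fun x => F x * g x * (2 * t)) volume a b :=
      ((hF.mul hg).mul continuous_const).intervalIntegrable _ _
    have hi3 : IntervalIntegrable (fun x => F x ^ 2 / w x) volume a b :=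
      ((hF.pow 2).div hw hw0).intervalIntegrable _ _
    simp only [hexpand] at hnonneg
    rw [intervalIntegral.integral_add (hi1.add hi2) hi3, intervalIntegral.integral_add hi1 hi2,
      intervalIntegral.integral_mul_const, intervalIntegral.integral_mul_const] at hnonneg
    linarith
  have hdisc := discrim_le_zero hquad
  rw [discrim] at hdisc
  nlinarith

section DualNorm

variable {T : ℝ} {k f F : ℝ → ℝ}

theorem integral_mul_le_sqrt_integral_sq_div (hT : 0 ≤ T) (hkc : Continuous k)
    (hkpos : ∀ x, 0 < k x) (hf : Continuous f) (hF : ∀ x, HasDerivAt F (f x) x)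
    (hFp : Periodic F T) {v : ℝ → ℝ} (hv : ContDiff ℝ 1 v) (hvp : Periodic v T)
    (hvk : ∫ x in 0..T, deriv v x ^ 2 * k x ≤ 1) :
    ∫ x in 0..T, f x * v x ≤ √(∫ x in 0..T, F x ^ 2 / k x) := by
  have hFc : Continuous F := continuous_iff_continuousAt.2 fun x => (hF x).continuousAt
  have hA : 0 ≤ ∫ x in 0..T, F x ^ 2 / k x :=
    intervalIntegral.integral_nonneg hT fun x _ => div_nonneg (sq_nonneg _) (hkpos x).le
  have hC : 0 ≤ ∫ x in 0..T, deriv v x ^ 2 * k x :=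
    intervalIntegral.integral_nonneg hT fun x _ => mul_nonneg (sq_nonneg _) (hkpos x).le
  have hcs := sq_integral_mul_le_integral_sq_div_mul_integral_sq_mul hT hFc
    hv.continuous_deriv_one hkc hkpos
  rw [integral_mul_eq_neg_integral_mul_deriv_of_periodic hF hf hv hFp hvp]
  refine (neg_le_abs _).trans (Real.abs_le_sqrt ?_)
  nlinarith

theorem exists_eq_sqrt_integral_sq_div (hT : 0 < T) (hkc : Continuous k) (hkp : Periodic k T)
    (hkpos : ∀ x, 0 < k x) (hf : Continuous f) (hF : ∀ x, HasDerivAt F (f x) x)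
    (hFp : Periodic F T) (hFk : ∫ x in 0..T, F x / k x = 0) :
    ∃ v : ℝ → ℝ, ContDiff ℝ 1 v ∧ Periodic v T ∧ ∫ x in 0..T, v x = 0 ∧
      ∫ x in 0..T, deriv v x ^ 2 * k x ≤ 1 ∧
      √(∫ x in 0..T, F x ^ 2 / k x) = ∫ x in 0..T, f x * v x := by
  set A := ∫ x in 0..T, F x ^ 2 / k x
  have hFc : Continuous F := continuous_iff_continuousAt.2 fun x => (hF x).continuousAt
  have hk0 : ∀ x, k x ≠ 0 := fun x => (hkpos x).ne'
  have hA : 0 ≤ A :=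
    intervalIntegral.integral_nonneg hT.le fun x _ => div_nonneg (sq_nonneg _) (hkpos x).le
  -- For `A = 0` the junk value `x / 0 = 0` makes this the constant witness `v = 0`.
  obtain ⟨v, hv, hvp, hv0, hderiv⟩ :=
    exists_periodic_integral_eq_zero_deriv_eq hT.ne' (g := fun x => -(F x / k x) / √A)
      ((hFc.div hkc hk0).neg.div_const _)
      (fun x => by simp only [hFp x, hkp x])
      (by rw [intervalIntegral.integral_div, intervalIntegral.integral_neg, hFk, neg_zero,
        zero_div])
  refine ⟨v, hv, hvp, hv0, ?_, ?_⟩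
  · have hpt : ∀ x, deriv v x ^ 2 * k x = F x ^ 2 / k x / A := fun x => by
      rw [hderiv, div_pow, neg_sq, Real.sq_sqrt hA]
      field_simp [hk0 x]
    simp only [hpt, intervalIntegral.integral_div]
    exact div_self_le_one A
  · have hpt : ∀ x, F x * deriv v x = -(F x ^ 2 / k x / √A) := fun x => by
      rw [hderiv]
      ring
    rw [integral_mul_eq_neg_integral_mul_deriv_of_periodic hF hf hv hFp hvp]
    simp only [hpt, intervalIntegral.integral_neg, intervalIntegral.integral_div, neg_neg]
    exact Real.div_sqrt.symm

theorem isGreatest_integral_mul (hT : 0 < T) (hkc : Continuous k) (hkp : Periodic k T)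
    (hkpos : ∀ x, 0 < k x) (hf : Continuous f) (hF : ∀ x, HasDerivAt F (f x) x)
    (hFp : Periodic F T) (hFk : ∫ x in 0..T, F x / k x = 0) :
    IsGreatest {c : ℝ | ∃ v : ℝ → ℝ, ContDiff ℝ 1 v ∧ Periodic v T ∧
        (∫ x in 0..T, v x) = 0 ∧ (∫ x in 0..T, deriv v x ^ 2 * k x) ≤ 1 ∧
        c = ∫ x in 0..T, f x * v x}
      (√(∫ x in 0..T, F x ^ 2 / k x)) := by
  refine ⟨exists_eq_sqrt_integral_sq_div hT hkc hkp hkpos hf hF hFp hFk, ?_⟩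
  rintro _ ⟨v, hv, hvp, -, hvk, rfl⟩
  exact integral_mul_le_sqrt_integral_sq_div hT.le hkc hkpos hf hF hFp hv hvp hvk

end DualNorm

section Prim

variable {k a : ℝ → ℝ}

theorem hasDerivAt_prim (ha : Continuous a) (x : ℝ) : HasDerivAt (prim k a) (a x) x :=
  (intervalIntegral.integral_hasDerivAt_right (ha.intervalIntegrable _ _)
    ha.stronglyMeasurable.stronglyMeasurableAtFilter ha.continuousAt).sub_const _

theorem periodic_prim (ha : Continuous a) (hap : Periodic a (2 * Real.pi))
    (ha0 : ∫ x in 0..2 * Real.pi, a x = 0) : Periodic (prim k a) (2 * Real.pi) := fun θ => by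
  simp only [prim, hap.intervalIntegral_of_integral_eq_zero ha ha0 θ]

theorem integral_prim_div_eq_zero (hkc : Continuous k) (hkpos : ∀ x, 0 < k x)
    (ha : Continuous a) : ∫ x in 0..2 * Real.pi, prim k a x / k x = 0 := by
  have hk0 : ∀ x, k x ≠ 0 := fun x => (hkpos x).ne'
  have hG : Continuous fun θ => ∫ u in 0..θ, a u :=
    intervalIntegral.continuous_primitive (fun _ _ => ha.intervalIntegrable _ _) 0
  have hI : 0 < ∫ x in 0..2 * Real.pi, 1 / k x :=
    intervalIntegral.intervalIntegral_pos_of_pos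
      ((continuous_const.div hkc hk0).intervalIntegrable _ _)
      (fun x => one_div_pos.2 (hkpos x)) Real.two_pi_pos
  set c := (∫ s in 0..2 * Real.pi, (∫ u in 0..s, a u) / k s) / ∫ s in 0..2 * Real.pi, 1 / k s
  have hpt : ∀ x, prim k a x / k x = (∫ u in 0..x, a u) / k x - c * (1 / k x) := fun x => by
    rw [prim, sub_div, mul_one_div]
  have hi₁ : IntervalIntegrable (fun x => (∫ u in 0..x, a u) / k x) volume 0 (2 * Real.pi) :=
    (hG.div hkc hk0).intervalIntegrable _ _
  have hi₂ : IntervalIntegrable (fun x => c * (1 / k x)) volume 0 (2 * Real.pi) :=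
    (continuous_const.mul (continuous_const.div hkc hk0)).intervalIntegrable _ _
  simp only [hpt]
  rw [intervalIntegral.integral_sub hi₁ hi₂, intervalIntegral.integral_const_mul,
    div_mul_cancel₀ _ hI.ne', sub_self]

end Prim

theorem stmt19_general (k h : ℝ → ℝ) (hkc : Continuous k)
    (hkper : Function.Periodic k (2 * Real.pi)) (hkpos : ∀ θ : ℝ, 0 < k θ)
    (hhc : Continuous h) (hhper : Function.Periodic h (2 * Real.pi))
    (hhmean : (∫ θ in (0:ℝ)..(2 * Real.pi), h θ) = 0) :
    sSup {c : ℝ | ∃ v : ℝ → ℝ, ContDiff ℝ 1 v ∧ Function.Periodic v (2 * Real.pi) ∧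
        (∫ θ in (0:ℝ)..(2 * Real.pi), v θ) = 0 ∧
        (∫ θ in (0:ℝ)..(2 * Real.pi), (deriv v θ) ^ 2 * k θ) ≤ 1 ∧
        c = ∫ θ in (0:ℝ)..(2 * Real.pi), h θ * v θ} =
      Real.sqrt (∫ θ in (0:ℝ)..(2 * Real.pi), (prim k h θ) ^ 2 / k θ) :=
  (isGreatest_integral_mul Real.two_pi_pos hkc hkper hkpos hhc (hasDerivAt_prim hhc)
    (periodic_prim hhc hhper hhmean) (integral_prim_div_eq_zero hkc hkpos hhc)).csSup_eq

/-- Dual-norm identity for the weighted negative Sobolev norm on the circle: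
the norm of a zero-mean `h` as a functional over the weighted gradient unit ball equals
the weighted `L²` norm of its normalized primitive. -/
theorem stmt19 (k h : ℝ → ℝ) (hkc : Continuous k)
    (hkper : Function.Periodic k (2 * Real.pi)) (hkpos : ∀ θ : ℝ, 0 < k θ)
    (hknorm : (∫ θ in (0:ℝ)..(2 * Real.pi), k θ) = 1)
    (hhc : Continuous h) (hhper : Function.Periodic h (2 * Real.pi))
    (hhmean : (∫ θ in (0:ℝ)..(2 * Real.pi), h θ) = 0) :
    sSup {c : ℝ | ∃ v : ℝ → ℝ, ContDiff ℝ 1 v ∧ Function.Periodic v (2 * Real.pi) ∧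
        (∫ θ in (0:ℝ)..(2 * Real.pi), v θ) = 0 ∧
        (∫ θ in (0:ℝ)..(2 * Real.pi), (deriv v θ) ^ 2 * k θ) ≤ 1 ∧
        c = ∫ θ in (0:ℝ)..(2 * Real.pi), h θ * v θ} =
      Real.sqrt (∫ θ in (0:ℝ)..(2 * Real.pi), (prim k h θ) ^ 2 / k θ) :=
  stmt19_general k h hkc hkper hkpos hhc hhper hhmean
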